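/- arXiv:2302.03345 — 5 statements merged into one kernel-verified Lean document; each statement's English description precedes it below -/
import Mathlib

section
/- Let α ∈ (0, 1/2), T > 0, η₀ ∈ ℝ, let b : ℝ → ℝ be Lipschitz and let ζ : [0,T] → ℝ be (1−α)-Hölder continuous. For ε > 0 let x^ε : [0,T] → ℝ be the unique continuous solution of x^ε_t = η₀ + ζ_t + ∫₀ᵗ [ b(x^ε_s) + (1/ε) f(x^ε_s) ] ds. Then for all 0 < ε ≤ ε' and all t ∈ [0,T], x^{ε'}_t ≤ x^{ε}_t; that is, the penalized solutions increase as ε decreases. -/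
open MeasureTheory Set Filter Topology

noncomputable section

/-- `f` is `γ`-Hölder continuous on `[a,b]`. -/
def HolderOnIcc (γ a b : ℝ) (f : ℝ → ℝ) : Prop :=
  ∃ C : ℝ, 0 ≤ C ∧ ∀ s ∈ Set.Icc a b, ∀ t ∈ Set.Icc a b, |f t - f s| ≤ C * |t - s| ^ γ

/-- The penalization function `f`: a `C²_b` nonincreasing function vanishing on `[0, ∞)`
with `0 < f x ≤ x⁻` for `x < 0`. -/
def PenaltyFun (f : ℝ → ℝ) : Prop :=
  ContDiff ℝ 2 f ∧ Antitone f ∧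
  (∃ M : ℝ, ∀ x : ℝ, |deriv f x| ≤ M ∧ |deriv (deriv f) x| ≤ M) ∧
  (∀ x : ℝ, 0 ≤ x → f x = 0) ∧
  (∀ x : ℝ, x < 0 → 0 < f x ∧ f x ≤ -x)

/-- Monotonicity of the penalized solutions: `x^ε` increases as `ε` decreases. -/
theorem penalized_monotone_in_eps
    (α T η₀ : ℝ) (hα : α ∈ Set.Ioo (0 : ℝ) (1 / 2)) (hT : 0 < T)
    (b : ℝ → ℝ) (K : NNReal) (hb : LipschitzWith K b)
    (ζ : ℝ → ℝ) (hζ : HolderOnIcc (1 - α) 0 T ζ)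
    (f : ℝ → ℝ) (hf : PenaltyFun f)
    (x : ℝ → ℝ → ℝ)
    (hx_cont : ∀ ε : ℝ, 0 < ε → ContinuousOn (x ε) (Set.Icc 0 T))
    (hx : ∀ ε : ℝ, 0 < ε → ∀ t ∈ Set.Icc 0 T,
      x ε t = η₀ + ζ t + ∫ s in (0 : ℝ)..t, (b (x ε s) + (1 / ε) * f (x ε s))) :
    ∀ ε ε' : ℝ, 0 < ε → ε ≤ ε' → ∀ t ∈ Set.Icc 0 T, x ε' t ≤ x ε t := by
  obtain ⟨hfc, hfa, _, hf0, hfneg⟩ := hf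
  have hfnn : ∀ y : ℝ, 0 ≤ f y := by
    intro y
    rcases le_or_gt 0 y with h | h
    · rw [hf0 y h]
    · exact (hfneg y h).1.le
  intro ε ε' hε hεε' t ht
  have hε' : 0 < ε' := lt_of_lt_of_le hε hεε'
  have hinv : 1 / ε' ≤ 1 / ε := one_div_le_one_div_of_le hε hεε'
  -- clamp function
  set c : ℝ → ℝ := fun s => max 0 (min s T) with hcdef
  have hc_cont : Continuous c := continuous_const.max (continuous_id.min continuous_const)
  have hc_mem : ∀ s, c s ∈ Icc 0 T := fun s =>
    ⟨le_max_left _ _, max_le hT.le (min_le_right _ _)⟩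
  have hc_eq : ∀ s ∈ Icc (0:ℝ) T, c s = s := by
    intro s hs
    simp [hcdef, min_eq_left hs.2, max_eq_right hs.1]
  have hX' : Continuous (fun s => x ε' (c s)) :=
    (hx_cont ε' hε').comp_continuous hc_cont hc_mem
  have hX : Continuous (fun s => x ε (c s)) :=
    (hx_cont ε hε).comp_continuous hc_cont hc_mem
  set g' : ℝ → ℝ := fun s => b (x ε' (c s)) + (1/ε') * f (x ε' (c s)) with hg'def
  set g : ℝ → ℝ := fun s => b (x ε (c s)) + (1/ε) * f (x ε (c s)) with hgdef
  have hg'c : Continuous g' :=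
    (hb.continuous.comp hX').add (continuous_const.mul (hfc.continuous.comp hX'))
  have hgc : Continuous g :=
    (hb.continuous.comp hX).add (continuous_const.mul (hfc.continuous.comp hX))
  set G : ℝ → ℝ := fun s => g' s - g s with hGdef
  have hGc : Continuous G := hg'c.sub hgc
  set u : ℝ → ℝ := fun r => ∫ s in (0:ℝ)..r, G s with hudef
  have hu_deriv : ∀ r : ℝ, HasDerivAt u (G r) r := by
    intro r
    exact intervalIntegral.integral_hasDerivAt_right
      (hGc.intervalIntegrable _ _)
      (hGc.stronglyMeasurableAtFilter _ _)
      hGc.continuousAt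
  have hu_cont : Continuous u :=
    continuous_iff_continuousAt.2 fun r => (hu_deriv r).continuousAt
  have key : ∀ r ∈ Icc (0:ℝ) T, x ε' r - x ε r = u r := by
    intro r hr
    have huIcc : uIcc (0:ℝ) r = Icc 0 r := uIcc_of_le hr.1
    have h1 : ∫ s in (0:ℝ)..r, (b (x ε' s) + (1/ε') * f (x ε' s))
        = ∫ s in (0:ℝ)..r, g' s := by
      apply intervalIntegral.integral_congr
      intro s hs
      rw [huIcc] at hs
      have hcs : c s = s := hc_eq s ⟨hs.1, hs.2.trans hr.2⟩
      simp [hg'def, hcs]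
    have h2 : ∫ s in (0:ℝ)..r, (b (x ε s) + (1/ε) * f (x ε s))
        = ∫ s in (0:ℝ)..r, g s := by
      apply intervalIntegral.integral_congr
      intro s hs
      rw [huIcc] at hs
      have hcs : c s = s := hc_eq s ⟨hs.1, hs.2.trans hr.2⟩
      simp [hgdef, hcs]
    rw [hx ε' hε' r hr, hx ε hε r hr, h1, h2, hudef]
    simp only [hGdef]
    rw [intervalIntegral.integral_sub (hg'c.intervalIntegrable _ _) (hgc.intervalIntegrable _ _)]
    ring
  have hut : u t ≤ 0 := by
    by_contra hpos
    push_neg at hpos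
    set S : Set ℝ := {s | s ∈ Icc (0:ℝ) t ∧ u s ≤ 0} with hSdef
    have hu0 : u 0 = 0 := intervalIntegral.integral_same
    have h0S : (0:ℝ) ∈ S := ⟨⟨le_refl 0, ht.1⟩, hu0.le⟩
    have hSne : S.Nonempty := ⟨0, h0S⟩
    have hSbdd : BddAbove S := ⟨t, fun s hs => hs.1.2⟩
    have hSclosed : IsClosed S := by
      have : S = Icc 0 t ∩ u ⁻¹' Iic 0 := rfl
      rw [this]
      exact isClosed_Icc.inter (isClosed_Iic.preimage hu_cont)
    set t₀ := sSup S with ht₀def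
    have hScomp : IsCompact S := isCompact_Icc.of_isClosed_subset hSclosed (fun s hs => hs.1)
    have ht₀S : t₀ ∈ S := hScomp.sSup_mem hSne
    have ht₀t : t₀ < t :=
      lt_of_le_of_ne ht₀S.1.2 (fun h => absurd (h ▸ ht₀S.2) (not_le.2 hpos))
    have hpos' : ∀ s, t₀ < s → s ≤ t → 0 < u s := by
      intro s hs1 hs2
      by_contra h
      push_neg at h
      have hsS : s ∈ S := ⟨⟨le_trans ht₀S.1.1 hs1.le, hs2⟩, h⟩
      exact absurd (le_csSup hSbdd hsS) (not_le.2 hs1)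
    set w : ℝ → ℝ := fun s => u s * Real.exp (-(K:ℝ) * s) with hwdef
    have hw_deriv : ∀ s : ℝ, HasDerivAt w
        (G s * Real.exp (-(K:ℝ)*s) + u s * (Real.exp (-(K:ℝ)*s) * (-(K:ℝ)))) s := by
      intro s
      have he : HasDerivAt (fun r => Real.exp (-(K:ℝ)*r)) (Real.exp (-(K:ℝ)*s) * (-(K:ℝ))) s := by
        have h1 : HasDerivAt (fun r : ℝ => -(K:ℝ) * r) (-(K:ℝ)) s := by
          simpa using (hasDerivAt_id s).const_mul (-(K:ℝ))
        exact h1.exp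
      exact (hu_deriv s).mul he
    have hwc : Continuous w :=
      hu_cont.mul (Real.continuous_exp.comp (continuous_const.mul continuous_id))
    have hanti : AntitoneOn w (Icc t₀ t) := by
      apply antitoneOn_of_deriv_nonpos (convex_Icc _ _) hwc.continuousOn
      · intro s _
        exact (hw_deriv s).differentiableAt.differentiableWithinAt
      · intro s hs
        rw [interior_Icc] at hs
        rw [(hw_deriv s).deriv]
        have hsT : s ∈ Icc (0:ℝ) T :=
          ⟨le_trans ht₀S.1.1 hs.1.le, (hs.2.le.trans ht.2)⟩
        have hus : 0 < u s := hpos' s hs.1 hs.2.le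
        have hXY : x ε' s - x ε s = u s := key s hsT
        have hYX : x ε s ≤ x ε' s := by linarith
        have hcs : c s = s := hc_eq s hsT
        have hGle : G s ≤ (K:ℝ) * u s := by
          have hb' : b (x ε' s) - b (x ε s) ≤ (K:ℝ) * (x ε' s - x ε s) := by
            have := hb.dist_le_mul (x ε' s) (x ε s)
            rw [Real.dist_eq, Real.dist_eq] at this
            have h1 : b (x ε' s) - b (x ε s) ≤ |b (x ε' s) - b (x ε s)| := le_abs_self _
            have h2 : |x ε' s - x ε s| = x ε' s - x ε s := abs_of_nonneg (by linarith)
            calc b (x ε' s) - b (x ε s) ≤ (K:ℝ) * |x ε' s - x ε s| := h1.trans this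
              _ = (K:ℝ) * (x ε' s - x ε s) := by rw [h2]
          have hf1 : (1/ε') * f (x ε' s) ≤ (1/ε') * f (x ε s) :=
            mul_le_mul_of_nonneg_left (hfa hYX) (by positivity)
          have hf2 : (1/ε') * f (x ε s) ≤ (1/ε) * f (x ε s) :=
            mul_le_mul_of_nonneg_right hinv (hfnn _)
          have : G s = (b (x ε' s) + (1/ε') * f (x ε' s)) - (b (x ε s) + (1/ε) * f (x ε s)) := by
            simp [hGdef, hg'def, hgdef, hcs]
          rw [this, ← hXY]
          linarith
        have hexp : 0 < Real.exp (-(K:ℝ)*s) := Real.exp_pos _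
        nlinarith
    have hmem₀ : t₀ ∈ Icc t₀ t := ⟨le_refl _, ht₀t.le⟩
    have hmemt : t ∈ Icc t₀ t := ⟨ht₀t.le, le_refl _⟩
    have hwle : w t ≤ w t₀ := hanti hmem₀ hmemt ht₀t.le
    have hw₀ : w t₀ ≤ 0 :=
      mul_nonpos_of_nonpos_of_nonneg ht₀S.2 (Real.exp_pos _).le
    have hwt : 0 < w t := mul_pos hpos (Real.exp_pos _)
    linarith
  have := key t ht
  linarith
end
end

section
/- Let α ∈ (0, 1/2), T > 0, η₀ ∈ ℝ, let b : ℝ → ℝ be Lipschitz and let ζ : [0,T] → ℝ be (1−α)-Hölder continuous. Then there exists a unique continuous function u : [0,T] → ℝ satisfying u_t = η₀ + ζ_t + ∫₀ᵗ b( u_s + max_{s' ∈ [0,s]} u_{s'}⁻ ) ds for all t ∈ [0,T], where u⁻ = max(0, −u). -/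
open MeasureTheory Set Filter Topology

noncomputable section

/-- The running maximum of the negative part of `u` on `[0, s]`. -/
def runNegMax (u : ℝ → ℝ) (s : ℝ) : ℝ :=
  sSup ((fun s' => max 0 (-u s')) '' Set.Icc 0 s)

/-!
The map `w ↦ runNegMax w` is `1`-Lipschitz for the sup norm on `[0, s]`, so the drift
`w ↦ ∫₀ᵗ b (w + runNegMax w)` is Lipschitz with constant `2K` and, like a Volterra operator,
only sees `w` on `[0, t]`. Iterating the Picard map `Φ` of the equation on `C([0, T])` therefore
gives `‖Φⁿ u - Φⁿ v‖ ≤ (2 K T)ⁿ / n! · ‖u - v‖`, so some iterate is a contraction, and Banach's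
fixed point theorem yields the unique solution.
-/

open Function

theorem HolderOnIcc.continuousOn {γ a c : ℝ} (hγ : 0 < γ) {f : ℝ → ℝ}
    (hf : HolderOnIcc γ a c f) : ContinuousOn f (Icc a c) := by
  obtain ⟨C, -, hC⟩ := hf
  intro x hx
  have hbound : Tendsto (fun t => C * |t - x| ^ γ) (𝓝[Icc a c] x) (𝓝 0) := by
    have hcont : Continuous fun t : ℝ => C * |t - x| ^ γ := by fun_prop (disch := positivity)
    simpa [Real.zero_rpow hγ.ne'] using (hcont.tendsto x).mono_left nhdsWithin_le_nhds
  rw [ContinuousWithinAt, tendsto_iff_dist_tendsto_zero]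
  refine squeeze_zero' (.of_forall fun _ => dist_nonneg) ?_ hbound
  filter_upwards [self_mem_nhdsWithin] with t ht
  exact hC x hx t ht

section RunNegMax

variable {w w₁ w₂ : ℝ → ℝ} {s ε : ℝ}

theorem runNegMax_nonneg (w : ℝ → ℝ) (s : ℝ) : 0 ≤ runNegMax w s :=
  Real.sSup_nonneg <| forall_mem_image.2 fun _ _ => le_max_left _ _

theorem runNegMax_congr (h : EqOn w₁ w₂ (Icc 0 s)) : runNegMax w₁ s = runNegMax w₂ s := by
  rw [runNegMax, runNegMax, image_congr fun r hr => by rw [h hr]]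

theorem bddAbove_image_negPart (hw : ContinuousOn w (Icc 0 s)) :
    BddAbove ((fun r => max 0 (-w r)) '' Icc 0 s) :=
  (isCompact_Icc.image_of_continuousOn (continuousOn_const.sup hw.neg)).bddAbove

theorem runNegMax_le_add (hw₂ : ContinuousOn w₂ (Icc 0 s)) (hε : 0 ≤ ε)
    (h : ∀ r ∈ Icc 0 s, w₂ r ≤ w₁ r + ε) : runNegMax w₁ s ≤ runNegMax w₂ s + ε := by
  refine Real.sSup_le (forall_mem_image.2 fun r hr => ?_)
    (add_nonneg (runNegMax_nonneg _ _) hε)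
  have hle : max 0 (-w₂ r) ≤ runNegMax w₂ s :=
    le_csSup (bddAbove_image_negPart hw₂) ⟨r, hr, rfl⟩
  have hr' := h r hr
  exact max_le (by linarith [le_max_left 0 (-w₂ r)]) (by linarith [le_max_right 0 (-w₂ r)])

theorem abs_runNegMax_sub_le (hw₁ : ContinuousOn w₁ (Icc 0 s))
    (hw₂ : ContinuousOn w₂ (Icc 0 s)) (hε : 0 ≤ ε) (h : ∀ r ∈ Icc 0 s, |w₁ r - w₂ r| ≤ ε) :
    |runNegMax w₁ s - runNegMax w₂ s| ≤ ε := by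
  have h₁₂ := runNegMax_le_add (w₁ := w₁) hw₂ hε fun r hr => by
    linarith [(abs_le.1 (h r hr)).1]
  have h₂₁ := runNegMax_le_add (w₁ := w₂) hw₁ hε fun r hr => by
    linarith [(abs_le.1 (h r hr)).2]
  exact abs_sub_le_iff.2 ⟨by linarith, by linarith⟩

/-- On `[0, ∞)`, rescaling `[0, s]` to `[0, 1]` writes the running maximum as a supremum over a
fixed compact set of a jointly continuous function. -/
theorem continuousOn_runNegMax (hw : Continuous w) : ContinuousOn (runNegMax w) (Ici 0) := by
  have hsup : Continuous fun s => sSup ((fun r => max 0 (-w (s * r))) '' Icc 0 1) :=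
    isCompact_Icc.continuous_sSup (by fun_prop)
  refine hsup.continuousOn.congr fun s hs => ?_
  have hIcc : (s * ·) '' Icc (0 : ℝ) 1 = Icc 0 s := by
    rw [image_mul_left_Icc hs zero_le_one, mul_zero, mul_one]
  rw [runNegMax, ← hIcc, image_image]

end RunNegMax

def runMaxDrift (b w : ℝ → ℝ) (t : ℝ) : ℝ :=
  ∫ s in (0 : ℝ)..t, b (w s + runNegMax w s)

section RunMaxDrift

variable {b w w₁ w₂ : ℝ → ℝ} {T t : ℝ}

theorem runMaxDrift_congr (h : EqOn w₁ w₂ (Icc 0 T)) :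
    EqOn (runMaxDrift b w₁) (runMaxDrift b w₂) (Icc 0 T) := by
  intro t ht
  refine intervalIntegral.integral_congr fun s hs => ?_
  rw [uIcc_of_le ht.1] at hs
  have hsub : Icc 0 s ⊆ Icc 0 T := Icc_subset_Icc_right (hs.2.trans ht.2)
  simp only [h (hsub (right_mem_Icc.2 hs.1)), runNegMax_congr (h.mono hsub)]

theorem continuousOn_runMaxDrift_integrand (hb : Continuous b) (hw : Continuous w) :
    ContinuousOn (fun s => b (w s + runNegMax w s)) (Ici 0) :=
  hb.comp_continuousOn (hw.continuousOn.add (continuousOn_runNegMax hw))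

theorem continuousOn_runMaxDrift (hT : 0 ≤ T) (hb : Continuous b) (hw : Continuous w) :
    ContinuousOn (runMaxDrift b w) (Icc 0 T) := by
  have hint : IntegrableOn (fun s => b (w s + runNegMax w s)) (uIcc 0 T) := by
    rw [uIcc_of_le hT]
    exact ((continuousOn_runMaxDrift_integrand hb hw).mono Icc_subset_Ici_self).integrableOn_Icc
  rw [← uIcc_of_le hT]
  exact intervalIntegral.continuousOn_primitive_interval hint

theorem integral_pow_div_factorial (n : ℕ) (t : ℝ) :
    ∫ s in (0 : ℝ)..t, s ^ n / n.factorial = t ^ (n + 1) / (n + 1).factorial := by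
  rw [intervalIntegral.integral_div, integral_pow, Nat.factorial_succ]
  push_cast
  field_simp
  ring

theorem abs_runMaxDrift_sub_le {K : NNReal} (hb : LipschitzWith K b) (hw₁ : Continuous w₁)
    (hw₂ : Continuous w₂) {n : ℕ} {B : ℝ} (hB : 0 ≤ B) (ht : 0 ≤ t)
    (h : ∀ s ∈ Icc 0 t, |w₁ s - w₂ s| ≤ B * s ^ n / n.factorial) :
    |runMaxDrift b w₁ t - runMaxDrift b w₂ t| ≤
      2 * K * B * t ^ (n + 1) / (n + 1).factorial := by
  have hint (w : ℝ → ℝ) (hw : Continuous w) :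
      IntervalIntegrable (fun s => b (w s + runNegMax w s)) volume 0 t :=
    ((continuousOn_runMaxDrift_integrand hb.continuous hw).mono
      Icc_subset_Ici_self).intervalIntegrable_of_Icc ht
  have hpt : ∀ s ∈ Icc 0 t, |b (w₁ s + runNegMax w₁ s) - b (w₂ s + runNegMax w₂ s)| ≤
      2 * K * B * (s ^ n / n.factorial) := by
    intro s hs
    have hM : |runNegMax w₁ s - runNegMax w₂ s| ≤ B * s ^ n / n.factorial :=
      abs_runNegMax_sub_le hw₁.continuousOn hw₂.continuousOn (by have := hs.1; positivity)
        fun r hr => (h r ⟨hr.1, hr.2.trans hs.2⟩).trans (by gcongr; exacts [hr.1, hr.2])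
    calc |b (w₁ s + runNegMax w₁ s) - b (w₂ s + runNegMax w₂ s)|
        ≤ K * |(w₁ s + runNegMax w₁ s) - (w₂ s + runNegMax w₂ s)| := by
          simpa only [Real.dist_eq] using hb.dist_le_mul _ _
      _ ≤ K * (|w₁ s - w₂ s| + |runNegMax w₁ s - runNegMax w₂ s|) := by
          rw [add_sub_add_comm]; gcongr; exact abs_add_le _ _
      _ ≤ K * (B * s ^ n / n.factorial + B * s ^ n / n.factorial) := by gcongr; exact h s hs
      _ = 2 * K * B * (s ^ n / n.factorial) := by ring
  calc |runMaxDrift b w₁ t - runMaxDrift b w₂ t|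
      = |∫ s in (0 : ℝ)..t, (b (w₁ s + runNegMax w₁ s) - b (w₂ s + runNegMax w₂ s))| := by
        rw [runMaxDrift, runMaxDrift, intervalIntegral.integral_sub (hint w₁ hw₁) (hint w₂ hw₂)]
    _ ≤ ∫ s in (0 : ℝ)..t, 2 * K * B * (s ^ n / n.factorial) := by
        rw [← Real.norm_eq_abs]
        refine intervalIntegral.norm_integral_le_of_norm_le ht (.of_forall fun s hs => ?_) ?_
        · exact (Real.norm_eq_abs _).trans_le (hpt s (Ioc_subset_Icc_self hs))
        · exact Continuous.intervalIntegrable (by fun_prop) _ _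
    _ = 2 * K * B * t ^ (n + 1) / (n + 1).factorial := by
        rw [intervalIntegral.integral_const_mul, integral_pow_div_factorial, mul_div_assoc]

end RunMaxDrift

section Picard

variable {T : ℝ} (hT : 0 ≤ T) {g b : ℝ → ℝ} (hg : ContinuousOn g (Icc 0 T))

def picardMap (hb : Continuous b) (u : C(Icc 0 T, ℝ)) : C(Icc 0 T, ℝ) where
  toFun t := g t + runMaxDrift b (IccExtend hT u) t
  continuous_toFun :=
    (hg.add (continuousOn_runMaxDrift hT hb (continuous_IccExtend_iff.2 u.continuous))).domRestrict

theorem isFixedPt_picardMap_iff (hb : Continuous b) {u : ℝ → ℝ} (hu : ContinuousOn u (Icc 0 T)) :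
    IsFixedPt (picardMap hT hg hb) ⟨(Icc 0 T).domRestrict u, hu.domRestrict⟩ ↔
      ∀ t ∈ Icc 0 T, u t = g t + runMaxDrift b u t := by
  have hext : EqOn (IccExtend hT ((Icc 0 T).domRestrict u)) u (Icc 0 T) := fun t ht =>
    IccExtend_of_mem hT _ ht
  simp only [IsFixedPt, ContinuousMap.ext_iff, Subtype.forall]
  refine forall₂_congr fun t ht => ?_
  change g t + runMaxDrift b (IccExtend hT ((Icc 0 T).domRestrict u)) t = u t ↔ _
  rw [runMaxDrift_congr hext ht, eq_comm]

variable {K : NNReal} (hb : LipschitzWith K b)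

theorem abs_picardMap_iterate_sub_le (n : ℕ) (u v : C(Icc 0 T, ℝ)) (t : Icc 0 T) :
    |(picardMap hT hg hb.continuous)^[n] u t - (picardMap hT hg hb.continuous)^[n] v t| ≤
      (2 * K) ^ n * dist u v * t ^ n / n.factorial := by
  induction n generalizing t with
  | zero => simpa [← Real.dist_eq] using ContinuousMap.dist_apply_le_dist t
  | succ n ih =>
    rw [iterate_succ_apply', iterate_succ_apply']
    set u' := (picardMap hT hg hb.continuous)^[n] u
    set v' := (picardMap hT hg hb.continuous)^[n] v
    have hbound : ∀ s ∈ Icc 0 (t : ℝ),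
        |IccExtend hT u' s - IccExtend hT v' s| ≤ (2 * K) ^ n * dist u v * s ^ n / n.factorial :=
      fun s hs => by
        have hsT : s ∈ Icc 0 T := ⟨hs.1, hs.2.trans t.2.2⟩
        simpa only [IccExtend_of_mem hT _ hsT] using ih ⟨s, hsT⟩
    have hdrift := abs_runMaxDrift_sub_le hb (continuous_IccExtend_iff.2 u'.continuous)
      (continuous_IccExtend_iff.2 v'.continuous) (by positivity) t.2.1 hbound
    change |(g t + _) - (g t + _)| ≤ _
    rw [add_sub_add_left_eq_sub]
    exact hdrift.trans_eq (by ring)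

theorem dist_picardMap_iterate_le (n : ℕ) (u v : C(Icc 0 T, ℝ)) :
    dist ((picardMap hT hg hb.continuous)^[n] u) ((picardMap hT hg hb.continuous)^[n] v) ≤
      (2 * K * T) ^ n / n.factorial * dist u v := by
  refine (ContinuousMap.dist_le (by positivity)).2 fun t => ?_
  rw [Real.dist_eq]
  refine (abs_picardMap_iterate_sub_le hT hg hb n u v t).trans ?_
  have htT : (t : ℝ) ^ n ≤ T ^ n := pow_le_pow_left₀ t.2.1 t.2.2 n
  calc (2 * K) ^ n * dist u v * t ^ n / n.factorial
      ≤ (2 * K) ^ n * dist u v * T ^ n / n.factorial := by gcongr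
    _ = (2 * K * T) ^ n / n.factorial * dist u v := by ring

theorem exists_contractingWith_picardMap_iterate :
    ∃ (n : ℕ) (c : NNReal), ContractingWith c (picardMap hT hg hb.continuous)^[n] := by
  obtain ⟨n, hn⟩ : ∃ n : ℕ, (2 * K * T) ^ n / n.factorial < 1 :=
    ((FloorSemiring.tendsto_pow_div_factorial_atTop _).eventually_lt_const one_pos).exists
  refine ⟨n, ⟨_, by positivity⟩, hn, LipschitzWith.of_dist_le_mul fun u v => ?_⟩
  exact dist_picardMap_iterate_le hT hg hb n u v

theorem existsUnique_isFixedPt_picardMap :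
    ∃! u, IsFixedPt (picardMap hT hg hb.continuous) u := by
  obtain ⟨n, c, hc⟩ := exists_contractingWith_picardMap_iterate hT hg hb
  exact ⟨_, hc.isFixedPt_fixedPoint_iterate, fun v hv => hc.fixedPoint_unique (hv.iterate n)⟩

end Picard

theorem exists_solution_runMaxDrift_unique {T : ℝ} (hT : 0 ≤ T) {g b : ℝ → ℝ}
    (hg : ContinuousOn g (Icc 0 T)) {K : NNReal} (hb : LipschitzWith K b) :
    ∃ u : ℝ → ℝ, ContinuousOn u (Icc 0 T) ∧ (∀ t ∈ Icc 0 T, u t = g t + runMaxDrift b u t) ∧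
      ∀ u' : ℝ → ℝ, ContinuousOn u' (Icc 0 T) →
        (∀ t ∈ Icc 0 T, u' t = g t + runMaxDrift b u' t) → EqOn u' u (Icc 0 T) := by
  obtain ⟨u₀, hfix, huniq⟩ := existsUnique_isFixedPt_picardMap hT hg hb
  have hu : Continuous (IccExtend hT u₀) := continuous_IccExtend_iff.2 u₀.continuous
  have hrestrict : (⟨(Icc 0 T).domRestrict (IccExtend hT u₀), hu.continuousOn.domRestrict⟩ :
      C(Icc 0 T, ℝ)) = u₀ := ContinuousMap.ext fun t => IccExtend_val hT _ t
  refine ⟨IccExtend hT u₀, hu.continuousOn, ?_, fun u' hu' hsol t ht => ?_⟩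
  · rw [← isFixedPt_picardMap_iff hT hg hb.continuous hu.continuousOn, hrestrict]
    exact hfix
  · have hu'₀ := huniq _ ((isFixedPt_picardMap_iff hT hg hb.continuous hu').2 hsol)
    rw [IccExtend_of_mem hT _ ht, ← hu'₀]
    rfl

/-- Existence and uniqueness for
`u t = η₀ + ζ t + ∫₀ᵗ b (u s + max_{s' ≤ s} u_{s'}⁻) ds`. -/
theorem existence_uniqueness_running_max
    (α T η₀ : ℝ) (hα : α ∈ Set.Ioo (0 : ℝ) (1 / 2)) (hT : 0 < T)
    (b : ℝ → ℝ) (K : NNReal) (hb : LipschitzWith K b)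
    (ζ : ℝ → ℝ) (hζ : HolderOnIcc (1 - α) 0 T ζ) :
    ∃ u : ℝ → ℝ, ContinuousOn u (Set.Icc 0 T) ∧
      (∀ t ∈ Set.Icc 0 T,
        u t = η₀ + ζ t + ∫ s in (0 : ℝ)..t, b (u s + runNegMax u s)) ∧
      (∀ u' : ℝ → ℝ, ContinuousOn u' (Set.Icc 0 T) →
        (∀ t ∈ Set.Icc 0 T,
          u' t = η₀ + ζ t + ∫ s in (0 : ℝ)..t, b (u' s + runNegMax u' s)) →
        ∀ t ∈ Set.Icc 0 T, u' t = u t) := by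
  have hζc : ContinuousOn ζ (Icc 0 T) := hζ.continuousOn (by linarith [hα.2])
  exact exists_solution_runMaxDrift_unique hT.le (continuousOn_const.add hζc) hb
end
end

section
/- Let α ∈ (0, 1/2), T > 0, η₀ ∈ ℝ, let b : ℝ → ℝ be Lipschitz and let ζ : [0,T] → ℝ be (1−α)-Hölder continuous. For ε > 0 let x^ε : [0,T] → ℝ be the unique continuous solution of x^ε_t = η₀ + ζ_t + ∫₀ᵗ [ b(x^ε_s) + (1/ε) f(x^ε_s) ] ds, and let u : [0,T] → ℝ be the unique continuous solution of u_t = η₀ + ζ_t + ∫₀ᵗ b( u_s + max_{s' ∈ [0,s]} u_{s'}⁻ ) ds. Set ũ_t = u_t + max_{s' ∈ [0,t]} u_{s'}⁻. Then ũ_t ≥ 0 for all t ∈ [0,T], and for every ε > 0 and every t ∈ [0,T] one has x^ε_t ≤ ũ_t. -/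
/-!
Write `ũ = u + m` with `m` the running maximum of `u⁻`, so that `ũ ≥ 0` and `m` is
nondecreasing. Fix `t` and let `s` be the last time before `t` at which `x^ε ≤ ũ`. On `(s, t]`
we have `x^ε > ũ ≥ 0`, so the penalty vanishes; the common forcing `ζ` cancels in the increments,
and since `m` only grows, `z = x^ε - ũ` satisfies `z r ≤ ∫ₛʳ K z` there by the Lipschitz bound
on `b`. Grönwall's inequality then gives `z ≤ 0` on `[s, t]`.
-/

open MeasureTheory Set Filter Topology

noncomputable section

theorem le_zero_of_le_integral_mul_self {h : ℝ → ℝ} {K a b : ℝ} (hK : 0 ≤ K)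
    (hc : ContinuousOn h (Icc a b)) (hle : ∀ r ∈ Icc a b, h r ≤ ∫ q in a..r, K * h q) :
    ∀ r ∈ Icc a b, h r ≤ 0 := by
  intro t ht
  set F : ℝ → ℝ := fun r => ∫ q in a..r, K * h q
  have hKc : ContinuousOn (fun q => K * h q) (Icc a b) := continuousOn_const.mul hc
  have hF_cont : ContinuousOn F (Icc a b) := by
    simpa only [uIcc_of_le (ht.1.trans ht.2)] using
      intervalIntegral.continuousOn_primitive_interval' (a := a)
        (hKc.intervalIntegrable_of_Icc (ht.1.trans ht.2)) left_mem_uIcc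
  have hF_deriv : ∀ r ∈ Ico a b, HasDerivWithinAt F (K * h r) (Ici r) r := by
    intro r hr
    have hmem : Icc a b ∈ 𝓝[>] r := Icc_mem_nhdsGT_of_mem hr
    exact intervalIntegral.integral_hasDerivWithinAt_right
      ((hKc.mono (Icc_subset_Icc_right hr.2.le)).intervalIntegrable_of_Icc hr.1)
      ⟨Icc a b, hmem, hKc.aestronglyMeasurable measurableSet_Icc⟩
      ((hKc r (Ico_subset_Icc_self hr)).mono_of_mem_nhdsWithin hmem)
  -- The primitive `F` has derivative `K h ≤ K F` and vanishes at `a`.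
  have hF_nonpos : F t ≤ 0 := by
    simpa only [gronwallBound_ε0_δ0] using
      le_gronwallBound_of_liminf_deriv_right_le (δ := 0) (K := K) (ε := 0) hF_cont
        (fun r hr _ hlt => by
          simpa only [slope_def_module, smul_eq_mul] using (hF_deriv r hr).liminf_right_slope_le hlt)
        (by simp [F])
        (fun r hr => by
          rw [add_zero]; exact mul_le_mul_of_nonneg_left (hle r (Ico_subset_Icc_self hr)) hK)
        t ht
  exact (hle t ht).trans hF_nonpos

theorem nonpos_of_le_integral_on_excursions {z : ℝ → ℝ} {K a b : ℝ} (hK : 0 ≤ K)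
    (hz : ContinuousOn z (Icc a b)) (ha : z a ≤ 0)
    (hexc : ∀ s ∈ Icc a b, ∀ r ∈ Icc s b, (∀ q ∈ Ioc s r, 0 < z q) →
      z r ≤ z s + ∫ q in s..r, K * z q) :
    ∀ t ∈ Icc a b, z t ≤ 0 := by
  intro t ht
  set S := {s ∈ Icc a t | z s ≤ 0}
  have hS_closed : IsClosed S :=
    (hz.mono (Icc_subset_Icc_right ht.2)).preimage_isClosed_of_isClosed isClosed_Icc isClosed_Iic
  have hS_bdd : BddAbove S := ⟨t, fun _ hs => hs.1.2⟩
  have hsS : sSup S ∈ S := hS_closed.csSup_mem ⟨a, left_mem_Icc.2 ht.1, ha⟩ hS_bdd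
  have hpos : ∀ q ∈ Ioc (sSup S) t, 0 < z q := fun q hq =>
    not_le.1 fun hq' => hq.1.not_ge (le_csSup hS_bdd ⟨⟨hsS.1.1.trans hq.1.le, hq.2⟩, hq'⟩)
  refine le_zero_of_le_integral_mul_self hK (hz.mono (Icc_subset_Icc hsS.1.1 ht.2))
    (fun r hr => ?_) t ⟨hsS.1.2, le_rfl⟩
  have := hexc (sSup S) ⟨hsS.1.1, hsS.1.2.trans ht.2⟩ r ⟨hr.1, hr.2.trans ht.2⟩
    fun q hq => hpos q ⟨hq.1, hq.2.trans hr.2⟩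
  linarith [hsS.2]

section runNegMax

variable {u v : ℝ → ℝ} {s t T : ℝ}

theorem bddAbove_negPart_image_Icc (hu : ContinuousOn u (Icc 0 t)) :
    BddAbove ((fun s' => max 0 (-u s')) '' Icc 0 t) :=
  isCompact_Icc.bddAbove_image (continuousOn_const.sup hu.neg)

theorem le_runNegMax (hu : ContinuousOn u (Icc 0 t)) (hs : s ∈ Icc 0 t) :
    max 0 (-u s) ≤ runNegMax u t :=
  le_csSup (bddAbove_negPart_image_Icc hu) (mem_image_of_mem _ hs)

theorem add_runNegMax_nonneg (hu : ContinuousOn u (Icc 0 t)) (ht : 0 ≤ t) :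
    0 ≤ u t + runNegMax u t := by
  linarith [le_runNegMax hu ⟨ht, le_rfl⟩, le_max_right 0 (-u t)]

theorem runNegMax_mono (hu : ContinuousOn u (Icc 0 t)) (hs : 0 ≤ s) (hst : s ≤ t) :
    runNegMax u s ≤ runNegMax u t :=
  csSup_le_csSup (bddAbove_negPart_image_Icc hu) ((nonempty_Icc.2 hs).image _)
    (image_mono (Icc_subset_Icc_right hst))

theorem runNegMax_congr_s5 (h : EqOn u v (Icc 0 T)) :
    EqOn (runNegMax u) (runNegMax v) (Icc 0 T) := fun s hs => by
  simp only [runNegMax]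
  rw [image_congr fun q hq => by rw [h ⟨hq.1, hq.2.trans hs.2⟩]]

/-- Rescaling `[0, s]` to `[0, 1]` turns the running maximum into a supremum over a fixed
compact set of a jointly continuous function. -/
theorem continuousOn_runNegMax_of_continuous (hu : Continuous u) :
    ContinuousOn (runNegMax u) (Ici 0) := by
  have hrescale : EqOn (fun s => sSup ((fun θ => max 0 (-u (s * θ))) '' Icc 0 1))
      (runNegMax u) (Ici 0) := fun s hs => by
    simp only [runNegMax]
    rw [← image_image (fun s' => max 0 (-u s')) (s * ·), image_mul_left_Icc hs zero_le_one,
      mul_zero, mul_one]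
  exact (isCompact_Icc.continuous_sSup (by fun_prop)).continuousOn.congr hrescale.symm

theorem continuousOn_runNegMax_s5 (hu : ContinuousOn u (Icc 0 T)) :
    ContinuousOn (runNegMax u) (Icc 0 T) := by
  rcases lt_or_ge T 0 with hT | hT
  · simp [Icc_eq_empty hT.not_ge]
  have hext : EqOn u (IccExtend hT fun p => u p) (Icc 0 T) := fun s hs =>
    (IccExtend_of_mem hT (fun p => u p) hs).symm
  exact ((continuousOn_runNegMax_of_continuous hu.domRestrict.Icc_extend').mono
    Icc_subset_Ici_self).congr (runNegMax_congr_s5 hext)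

end runNegMax

theorem sub_eq_integral_of_eq_add_integral {y ζ g : ℝ → ℝ} {c T s r : ℝ}
    (hg : ContinuousOn g (Icc 0 T)) (hy : ∀ t ∈ Icc 0 T, y t = c + ζ t + ∫ q in 0..t, g q)
    (hs : s ∈ Icc 0 T) (hr : r ∈ Icc 0 T) :
    y r - y s = ζ r - ζ s + ∫ q in s..r, g q := by
  have hint : ∀ t ∈ Icc 0 T, IntervalIntegrable g volume 0 t := fun t ht =>
    (hg.mono (Icc_subset_Icc_right ht.2)).intervalIntegrable_of_Icc ht.1
  rw [hy r hr, hy s hs, ← intervalIntegral.integral_interval_sub_left (hint r hr) (hint s hs)]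
  ring

theorem sub_add_runNegMax_le_integral_of_pos {b f ζ x u : ℝ → ℝ} {K : NNReal} {η₀ c T : ℝ}
    (hb : LipschitzWith K b) (hf : Continuous f) (hf_zero : ∀ y, 0 ≤ y → f y = 0)
    (hx_cont : ContinuousOn x (Icc 0 T))
    (hx : ∀ t ∈ Icc 0 T, x t = η₀ + ζ t + ∫ s in (0 : ℝ)..t, (b (x s) + c * f (x s)))
    (hu_cont : ContinuousOn u (Icc 0 T))
    (hu : ∀ t ∈ Icc 0 T, u t = η₀ + ζ t + ∫ s in (0 : ℝ)..t, b (u s + runNegMax u s)) :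
    ∀ s ∈ Icc 0 T, ∀ r ∈ Icc s T,
      (∀ q ∈ Ioc s r, 0 < x q - (u q + runNegMax u q)) →
      x r - (u r + runNegMax u r) ≤
        x s - (u s + runNegMax u s) + ∫ q in s..r, K * (x q - (u q + runNegMax u q)) := by
  intro s hs r hr hpos
  have hrT : r ∈ Icc 0 T := ⟨hs.1.trans hr.1, hr.2⟩
  have hsr : Icc s r ⊆ Icc 0 T := Icc_subset_Icc hs.1 hr.2
  have hm_cont := continuousOn_runNegMax_s5 hu_cont
  have hgx : ContinuousOn (fun q => b (x q) + c * f (x q)) (Icc 0 T) :=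
    (hb.continuous.comp_continuousOn hx_cont).add
      (continuousOn_const.mul (hf.comp_continuousOn hx_cont))
  have hgu : ContinuousOn (fun q => b (u q + runNegMax u q)) (Icc 0 T) :=
    hb.continuous.comp_continuousOn (hu_cont.add hm_cont)
  have hKz : ContinuousOn (fun q => K * (x q - (u q + runNegMax u q))) (Icc 0 T) :=
    continuousOn_const.mul (hx_cont.sub (hu_cont.add hm_cont))
  have hpointwise : ∀ q ∈ Ioo s r, b (x q) + c * f (x q) - b (u q + runNegMax u q) ≤
      K * (x q - (u q + runNegMax u q)) := by
    intro q hq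
    have hq_pos := hpos q (Ioo_subset_Ioc_self hq)
    have hqT : q ∈ Icc 0 T := hsr (Ioo_subset_Icc_self hq)
    have hx_nonneg : 0 ≤ x q := by
      linarith [add_runNegMax_nonneg (hu_cont.mono (Icc_subset_Icc_right hqT.2)) hqT.1]
    rw [hf_zero _ hx_nonneg, mul_zero, add_zero, ← abs_of_pos hq_pos]
    simpa only [Real.dist_eq] using (le_abs_self _).trans (hb.dist_le_mul _ _)
  have hIx := (hgx.mono hsr).intervalIntegrable_of_Icc (μ := volume) hr.1
  have hIu := (hgu.mono hsr).intervalIntegrable_of_Icc (μ := volume) hr.1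
  have hintegral := intervalIntegral.integral_mono_on_of_le_Ioo hr.1 (hIx.sub hIu)
    ((hKz.mono hsr).intervalIntegrable_of_Icc hr.1) hpointwise
  rw [intervalIntegral.integral_sub hIx hIu] at hintegral
  linarith [sub_eq_integral_of_eq_add_integral hgx hx hs hrT,
    sub_eq_integral_of_eq_add_integral hgu hu hs hrT,
    runNegMax_mono (hu_cont.mono (Icc_subset_Icc_right hr.2)) hs.1 hr.1]

theorem penalized_dominated_by_utilde_general
    (T η₀ : ℝ)
    (b : ℝ → ℝ) (K : NNReal) (hb : LipschitzWith K b)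
    (ζ : ℝ → ℝ)
    (f : ℝ → ℝ) (hf : PenaltyFun f)
    (x : ℝ → ℝ → ℝ)
    (hx_cont : ∀ ε : ℝ, 0 < ε → ContinuousOn (x ε) (Set.Icc 0 T))
    (hx : ∀ ε : ℝ, 0 < ε → ∀ t ∈ Set.Icc 0 T,
      x ε t = η₀ + ζ t + ∫ s in (0 : ℝ)..t, (b (x ε s) + (1 / ε) * f (x ε s)))
    (u : ℝ → ℝ)
    (hu_cont : ContinuousOn u (Set.Icc 0 T))
    (hu : ∀ t ∈ Set.Icc 0 T,
      u t = η₀ + ζ t + ∫ s in (0 : ℝ)..t, b (u s + runNegMax u s)) :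
    (∀ t ∈ Set.Icc 0 T, 0 ≤ u t + runNegMax u t) ∧
    (∀ ε : ℝ, 0 < ε → ∀ t ∈ Set.Icc 0 T, x ε t ≤ u t + runNegMax u t) := by
  obtain ⟨hf_smooth, -, -, hf_zero, -⟩ := hf
  refine ⟨fun t ht => add_runNegMax_nonneg (hu_cont.mono (Icc_subset_Icc_right ht.2)) ht.1, ?_⟩
  intro ε hε t ht
  have h0 : (0 : ℝ) ∈ Icc 0 T := ⟨le_rfl, ht.1.trans ht.2⟩
  have hstart : x ε 0 - (u 0 + runNegMax u 0) ≤ 0 := by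
    rw [hx ε hε 0 h0, hu 0 h0]
    simp only [intervalIntegral.integral_same, add_zero]
    linarith [le_max_left 0 (-u 0),
      le_runNegMax (hu_cont.mono (Icc_subset_Icc_right h0.2)) (left_mem_Icc.2 le_rfl)]
  have hexcursion := sub_add_runNegMax_le_integral_of_pos hb hf_smooth.continuous hf_zero
    (hx_cont ε hε) (hx ε hε) hu_cont hu
  exact sub_nonpos.1 <| nonpos_of_le_integral_on_excursions K.coe_nonneg
    ((hx_cont ε hε).sub (hu_cont.add (continuousOn_runNegMax_s5 hu_cont))) hstart hexcursion t ht

/-- Upper bound for the penalized solutions: `ũ_t = u_t + max_{s' ≤ t} u_{s'}⁻` is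
nonnegative and dominates every `x^ε`. -/
theorem penalized_dominated_by_utilde
    (α T η₀ : ℝ) (hα : α ∈ Set.Ioo (0 : ℝ) (1 / 2)) (hT : 0 < T)
    (b : ℝ → ℝ) (K : NNReal) (hb : LipschitzWith K b)
    (ζ : ℝ → ℝ) (hζ : HolderOnIcc (1 - α) 0 T ζ)
    (f : ℝ → ℝ) (hf : PenaltyFun f)
    (x : ℝ → ℝ → ℝ)
    (hx_cont : ∀ ε : ℝ, 0 < ε → ContinuousOn (x ε) (Set.Icc 0 T))
    (hx : ∀ ε : ℝ, 0 < ε → ∀ t ∈ Set.Icc 0 T,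
      x ε t = η₀ + ζ t + ∫ s in (0 : ℝ)..t, (b (x ε s) + (1 / ε) * f (x ε s)))
    (u : ℝ → ℝ)
    (hu_cont : ContinuousOn u (Set.Icc 0 T))
    (hu : ∀ t ∈ Set.Icc 0 T,
      u t = η₀ + ζ t + ∫ s in (0 : ℝ)..t, b (u s + runNegMax u s)) :
    (∀ t ∈ Set.Icc 0 T, 0 ≤ u t + runNegMax u t) ∧
    (∀ ε : ℝ, 0 < ε → ∀ t ∈ Set.Icc 0 T, x ε t ≤ u t + runNegMax u t) :=
  penalized_dominated_by_utilde_general T η₀ b K hb ζ f hf x hx_cont hx u hu_cont hu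
end
end

section
/- Let T > 0 and let z : [0,T] → ℝ be continuous with z₀ ≥ 0. Define y_t = max_{s ∈ [0,t]} (z_s)⁻, where x⁻ = max(0, −x), and x_t = z_t + y_t. Then the pair (x, y) solves the Skorokhod problem for z: x_t ≥ 0 for all t ∈ [0,T]; y₀ = 0, y is continuous and nondecreasing; and ∫₀ᵗ x_s dy_s = 0 for all t ∈ [0,T], where the integral is with respect to the Lebesgue–Stieltjes measure of y. -/
open MeasureTheory Set Filter Topology

noncomputable section

/-- `∫₀ᵗ x_s dy_s = 0` for all `t ∈ [0,T]`, where the integral is taken with respect to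
the Lebesgue–Stieltjes measure of (any Stieltjes extension of) the nondecreasing
function `y` on `[0,T]`, extended by `0` to the left of `0` and by `y T` to the
right of `T`. -/
def StieltjesIntegralZero (T : ℝ) (x y : ℝ → ℝ) : Prop :=
  ∀ Y : StieltjesFunction ℝ,
    (∀ t : ℝ, t ≤ 0 → Y t = 0) → (∀ t ∈ Set.Icc 0 T, Y t = y t) →
    (∀ t : ℝ, T ≤ t → Y t = y T) →
    ∀ t ∈ Set.Icc 0 T, ∫ s in Set.Icc (0 : ℝ) t, x s ∂Y.measure = 0

/-!
The running maximum `y` of `z⁻` is continuous and nondecreasing, and `z + y ≥ 0` because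
`y_t ≥ (z_t)⁻ ≥ -z_t`. On an interval `[a, b]` where `x = z + y > 0` the function `y` is flat:
otherwise `y_b = (z_s)⁻ > 0` for some `s ∈ (a, b]`, so `y_s = -z_s`, i.e. `x_s = 0`. Hence the open
set `{x > 0}` is covered by intervals of `dy`-measure zero, so `x = 0` for `dy`-a.e. time.
-/

def runningSup (f : ℝ → ℝ) (t : ℝ) : ℝ := sSup (f '' Icc 0 t)

section RunningSup

variable {f : ℝ → ℝ} {T t : ℝ}

theorem runningSup_zero (f : ℝ → ℝ) : runningSup f 0 = f 0 := by
  rw [runningSup, Icc_self, image_singleton, csSup_singleton]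

theorem isCompact_image_Icc_of_continuousOn (hf : ContinuousOn f (Icc 0 T)) (ht : t ≤ T) :
    IsCompact (f '' Icc 0 t) :=
  isCompact_Icc.image_of_continuousOn (hf.mono (Icc_subset_Icc_right ht))

theorem le_runningSup (hf : ContinuousOn f (Icc 0 T)) (ht : t ≤ T) {s : ℝ} (hs : s ∈ Icc 0 t) :
    f s ≤ runningSup f t :=
  le_csSup (isCompact_image_Icc_of_continuousOn hf ht).bddAbove (mem_image_of_mem f hs)

theorem runningSup_mem_image (hf : ContinuousOn f (Icc 0 T)) (ht : t ∈ Icc 0 T) :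
    runningSup f t ∈ f '' Icc 0 t :=
  (isCompact_image_Icc_of_continuousOn hf ht.2).sSup_mem ((nonempty_Icc.2 ht.1).image f)

theorem monotoneOn_runningSup (hf : ContinuousOn f (Icc 0 T)) :
    MonotoneOn (runningSup f) (Icc 0 T) := fun _ ha _ hb hab =>
  csSup_le_csSup (isCompact_image_Icc_of_continuousOn hf hb.2).bddAbove
    ((nonempty_Icc.2 ha.1).image f) (image_mono (Icc_subset_Icc_right hab))

theorem continuousOn_runningSup (hf : ContinuousOn f (Icc 0 T)) :
    ContinuousOn (runningSup f) (Icc 0 T) := by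
  rcases lt_or_ge T 0 with hT | hT
  · simp [Icc_eq_empty_of_lt hT]
  set F : ℝ → ℝ := fun u => f (projIcc 0 T hT u)
  have hF : Continuous F :=
    hf.comp_continuous (continuous_subtype_val.comp continuous_projIcc)
      fun u => (projIcc 0 T hT u).2
  -- `[0, t]` is the image of `[0, 1]` under `s ↦ t * s`, which makes `t` a parameter.
  have hsup : Continuous fun t => sSup ((fun s => F (t * s)) '' Icc 0 1) :=
    isCompact_Icc.continuous_sSup (hF.comp (continuous_fst.mul continuous_snd))
  refine hsup.continuousOn.congr fun t ht => ?_
  have hFf : EqOn F f (Icc 0 t) := fun s hs => by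
    simp only [F, projIcc_of_mem hT ⟨hs.1, hs.2.trans ht.2⟩]
  show sSup _ = sSup _
  rw [← image_image F (t * ·), image_mul_left_Icc ht.1 zero_le_one, mul_zero,
    mul_one, hFf.image_eq]

end RunningSup

def skorokhodRegulator (z : ℝ → ℝ) : ℝ → ℝ := runningSup fun s => max 0 (-z s)

section SkorokhodReg

variable {z : ℝ → ℝ} {T : ℝ}

theorem skorokhodRegulator_zero (hz0 : 0 ≤ z 0) : skorokhodRegulator z 0 = 0 := by
  rw [skorokhodRegulator, runningSup_zero, max_eq_left (neg_nonpos.2 hz0)]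

variable (hz : ContinuousOn z (Icc 0 T))
include hz

theorem continuousOn_max_zero_neg : ContinuousOn (fun s => max 0 (-z s)) (Icc 0 T) :=
  continuousOn_const.sup hz.neg

theorem continuousOn_skorokhodRegulator : ContinuousOn (skorokhodRegulator z) (Icc 0 T) :=
  continuousOn_runningSup (continuousOn_max_zero_neg hz)

theorem monotoneOn_skorokhodRegulator : MonotoneOn (skorokhodRegulator z) (Icc 0 T) :=
  monotoneOn_runningSup (continuousOn_max_zero_neg hz)

theorem max_zero_neg_le_skorokhodRegulator {s t : ℝ} (ht : t ≤ T) (hs : s ∈ Icc 0 t) :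
    max 0 (-z s) ≤ skorokhodRegulator z t :=
  le_runningSup (continuousOn_max_zero_neg hz) ht hs

theorem add_skorokhodRegulator_nonneg {t : ℝ} (ht : t ∈ Icc 0 T) : 0 ≤ z t + skorokhodRegulator z t := by
  have := max_zero_neg_le_skorokhodRegulator hz ht.2 ⟨ht.1, le_rfl⟩
  linarith [le_max_right 0 (-z t)]

theorem skorokhodRegulator_eq_of_forall_pos {a b : ℝ} (ha : 0 ≤ a) (hab : a ≤ b) (hb : b ≤ T)
    (hpos : ∀ s ∈ Icc a b, 0 < z s + skorokhodRegulator z s) :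
    skorokhodRegulator z a = skorokhodRegulator z b := by
  refine le_antisymm (monotoneOn_skorokhodRegulator hz ⟨ha, hab.trans hb⟩ ⟨ha.trans hab, hb⟩ hab) ?_
  obtain ⟨s, hs, hsb⟩ := runningSup_mem_image (continuousOn_max_zero_neg hz) ⟨ha.trans hab, hb⟩
  change max 0 (-z s) = skorokhodRegulator z b at hsb
  rw [← hsb]
  rcases le_or_gt s a with hsa | has
  · exact max_zero_neg_le_skorokhodRegulator hz (hab.trans hb) ⟨hs.1, hsa⟩
  have hys : skorokhodRegulator z s = max 0 (-z s) :=
    le_antisymm (hsb ▸ monotoneOn_skorokhodRegulator hz ⟨hs.1, hs.2.trans hb⟩ ⟨ha.trans hab, hb⟩ hs.2)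
      (max_zero_neg_le_skorokhodRegulator hz (hs.2.trans hb) ⟨hs.1, le_rfl⟩)
  have hxs := hpos s ⟨has.le, hs.2⟩
  rcases max_choice 0 (-z s) with h0 | hneg
  · rw [h0]
    exact (le_max_left _ _).trans (max_zero_neg_le_skorokhodRegulator hz (hab.trans hb) ⟨ha, le_rfl⟩)
  · rw [hys, hneg, add_neg_cancel] at hxs
    exact absurd hxs (lt_irrefl 0)

end SkorokhodReg

theorem StieltjesFunction.measure_null_of_locally_const (Y : StieltjesFunction ℝ) {S : Set ℝ}
    (h : ∀ s ∈ S, ∃ a < s, ∃ b > s, Y a = Y b) : Y.measure S = 0 :=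
  measure_null_of_locally_null S fun s hs => by
    obtain ⟨a, has, b, hsb, hab⟩ := h s hs
    exact ⟨Ioc a b, mem_nhdsWithin_of_mem_nhds (Ioc_mem_nhds has hsb),
      by rw [Y.measure_Ioc, hab, sub_self, ENNReal.ofReal_zero]⟩

theorem stieltjesIntegralZero_of_flat {T : ℝ} {x y : ℝ → ℝ} (hx : ContinuousOn x (Icc 0 T))
    (hx_nonneg : ∀ t ∈ Icc 0 T, 0 ≤ x t)
    (hflat : ∀ a b, 0 ≤ a → a ≤ b → b ≤ T → (∀ s ∈ Icc a b, 0 < x s) → y a = y b) :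
    StieltjesIntegralZero T x y := by
  intro Y hY0 hYy hYT t ht
  have hT : 0 ≤ T := ht.1.trans ht.2
  set c : ℝ → ℝ := fun u => max 0 (min u T)
  have hc_mem : ∀ u, c u ∈ Icc 0 T := fun u => ⟨le_max_left _ _, max_le hT (min_le_right _ _)⟩
  have hYc : ∀ u, Y u = y (c u) := by
    intro u
    rw [← hYy _ (hc_mem u)]
    rcases le_total u 0 with hu0 | hu0
    · rw [hY0 u hu0, hY0 _ (max_le le_rfl ((min_le_left _ _).trans hu0))]
    rcases le_total u T with huT | huT
    · simp only [c, min_eq_left huT, max_eq_right hu0]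
    · simp only [c, min_eq_right huT, max_eq_right hT, hYT u huT, hYy T ⟨hT, le_rfl⟩]
  suffices hnull : Y.measure {s | s ∈ Icc 0 t ∧ 0 < x s} = 0 by
    refine integral_eq_zero_of_ae ((ae_restrict_iff' measurableSet_Icc).2 ?_)
    refine ae_iff.2 (measure_mono_null (fun s hs => ?_) hnull)
    obtain ⟨hst, hne⟩ := Classical.not_imp.1 hs
    exact ⟨hst, (hx_nonneg s ⟨hst.1, hst.2.trans ht.2⟩).lt_of_ne' hne⟩
  refine Y.measure_null_of_locally_const fun s ⟨hs, hxs⟩ => ?_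
  have hsT : s ∈ Icc 0 T := ⟨hs.1, hs.2.trans ht.2⟩
  obtain ⟨δ, hδ, hδx⟩ := Metric.eventually_nhds_iff.1
    (eventually_nhdsWithin_iff.1 ((hx s hsT).eventually (eventually_gt_nhds hxs)))
  refine ⟨s - δ / 2, by linarith, s + δ / 2, by linarith, ?_⟩
  have hleft : s - δ / 2 ≤ c (s - δ / 2) := le_max_of_le_right (le_min le_rfl (by linarith [hsT.2]))
  have hright : c (s + δ / 2) ≤ s + δ / 2 := max_le (by linarith [hsT.1]) (min_le_left _ _)
  rw [hYc, hYc]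
  have hc_mono : c (s - δ / 2) ≤ c (s + δ / 2) :=
    max_le_max le_rfl (min_le_min_right T (by linarith))
  refine hflat _ _ (hc_mem _).1 hc_mono (hc_mem _).2 fun u hu => hδx ?_ ?_
  · rw [Real.dist_eq, abs_sub_lt_iff]
    constructor <;> linarith [hu.1, hu.2]
  · exact ⟨(hc_mem _).1.trans hu.1, hu.2.trans (hc_mem _).2⟩

theorem skorokhod_map_solves_general
    (T : ℝ) (z : ℝ → ℝ)
    (hz_cont : ContinuousOn z (Set.Icc 0 T)) (hz0 : 0 ≤ z 0)
    (y x : ℝ → ℝ)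
    (hy : ∀ t : ℝ, y t = sSup ((fun s => max 0 (-z s)) '' Set.Icc 0 t))
    (hx : ∀ t : ℝ, x t = z t + y t) :
    (∀ t ∈ Set.Icc 0 T, 0 ≤ x t) ∧
    y 0 = 0 ∧ ContinuousOn y (Set.Icc 0 T) ∧ MonotoneOn y (Set.Icc 0 T) ∧
    StieltjesIntegralZero T x y := by
  obtain rfl : y = skorokhodRegulator z := funext hy
  obtain rfl : x = fun t => z t + skorokhodRegulator z t := funext hx
  refine ⟨fun t ht => add_skorokhodRegulator_nonneg hz_cont ht, skorokhodRegulator_zero hz0,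
    continuousOn_skorokhodRegulator hz_cont, monotoneOn_skorokhodRegulator hz_cont, ?_⟩
  exact stieltjesIntegralZero_of_flat (hz_cont.add (continuousOn_skorokhodRegulator hz_cont))
    (fun t ht => add_skorokhodRegulator_nonneg hz_cont ht)
    fun a b ha hab hb hpos => skorokhodRegulator_eq_of_forall_pos hz_cont ha hab hb hpos

/-- The explicit Skorokhod map: `y_t = max_{s ∈ [0,t]} (z_s)⁻` and `x_t = z_t + y_t`
solve the Skorokhod problem for `z`. -/
theorem skorokhod_map_solves
    (T : ℝ) (hT : 0 < T) (z : ℝ → ℝ)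
    (hz_cont : ContinuousOn z (Set.Icc 0 T)) (hz0 : 0 ≤ z 0)
    (y x : ℝ → ℝ)
    (hy : ∀ t : ℝ, y t = sSup ((fun s => max 0 (-z s)) '' Set.Icc 0 t))
    (hx : ∀ t : ℝ, x t = z t + y t) :
    (∀ t ∈ Set.Icc 0 T, 0 ≤ x t) ∧
    y 0 = 0 ∧ ContinuousOn y (Set.Icc 0 T) ∧ MonotoneOn y (Set.Icc 0 T) ∧
    StieltjesIntegralZero T x y :=
  skorokhod_map_solves_general T z hz_cont hz0 y x hy hx
end
end

section
/- Let T > 0 and let z : [0,T] → ℝ be continuous with z₀ ≥ 0. If (x, y) and (x̃, ỹ) are two pairs of continuous functions on [0,T] that both solve the Skorokhod problem for z, then x = x̃ and y = ỹ. Consequently, the solution is given explicitly by y_t = max_{s ∈ [0,t]} (z_s)⁻ and x_t = z_t + y_t. -/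
/-!
The regulator `y` of any solution is squeezed by the running maximum
`M_t = max_{s ≤ t} (z_s)⁻`. From below: `y` is nondecreasing and `z + y ≥ 0`, so
`y_t ≥ y_s ≥ -z_s` for every `s ≤ t`. From above: let `s` be the last zero of `x` in
`[0,t]` (or `0`). Then `x > 0` on `(s,t]`, so `dy` charges no mass there and
`y_t = y_s ≤ (z_s)⁻ ≤ M_t`. Hence every solution has `y = M`, which gives uniqueness
and the explicit formula at once.
-/

open MeasureTheory Set Filter Topology

noncomputable section

/-- `(x, y)` solves the Skorokhod problem for the continuous path `z` on `[0,T]`. -/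
def SolvesSkorokhod (T : ℝ) (z x y : ℝ → ℝ) : Prop :=
  ContinuousOn x (Set.Icc 0 T) ∧ ContinuousOn y (Set.Icc 0 T) ∧
  (∀ t ∈ Set.Icc 0 T, x t = z t + y t) ∧
  (∀ t ∈ Set.Icc 0 T, 0 ≤ x t) ∧
  y 0 = 0 ∧ MonotoneOn y (Set.Icc 0 T) ∧
  StieltjesIntegralZero T x y

def StieltjesFunction.ofMonotoneOnIcc {a b : ℝ} (hab : a ≤ b) {y : ℝ → ℝ}
    (hc : ContinuousOn y (Icc a b)) (hm : MonotoneOn y (Icc a b)) : StieltjesFunction ℝ where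
  toFun := Set.IccExtend hab ((Icc a b).domRestrict y)
  mono' := (monotoneOn_iff_monotone.1 hm).IccExtend hab
  right_continuous' _ := (hc.domRestrict.Icc_extend' (h := hab)).continuousWithinAt

namespace StieltjesFunction

variable {a b : ℝ} (hab : a ≤ b) {y : ℝ → ℝ} (hc : ContinuousOn y (Icc a b))
  (hm : MonotoneOn y (Icc a b))

theorem ofMonotoneOnIcc_of_mem {t : ℝ} (ht : t ∈ Icc a b) : ofMonotoneOnIcc hab hc hm t = y t :=
  Set.IccExtend_of_mem hab ((Icc a b).domRestrict y) ht

theorem ofMonotoneOnIcc_of_le_left {t : ℝ} (ht : t ≤ a) : ofMonotoneOnIcc hab hc hm t = y a :=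
  Set.IccExtend_of_le_left hab ((Icc a b).domRestrict y) ht

theorem ofMonotoneOnIcc_of_right_le {t : ℝ} (ht : b ≤ t) : ofMonotoneOnIcc hab hc hm t = y b :=
  Set.IccExtend_of_right_le hab ((Icc a b).domRestrict y) ht

end StieltjesFunction

theorem StieltjesFunction.le_of_setIntegral_eq_zero (Y : StieltjesFunction ℝ) {S : Set ℝ}
    {x : ℝ → ℝ} (hx_int : IntegrableOn x S Y.measure) (hx_nonneg : ∀ u ∈ S, 0 ≤ x u)
    (hS : MeasurableSet S) (h_zero : ∫ u in S, x u ∂Y.measure = 0) {s t : ℝ}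
    (hst : Ioc s t ⊆ S) (hpos : ∀ u ∈ Ioc s t, 0 < x u) : Y t ≤ Y s := by
  have h_ae : 0 ≤ᵐ[Y.measure.restrict S] x := (ae_restrict_iff' hS).2 (.of_forall hx_nonneg)
  have h_null : Y.measure (Function.support x ∩ S) = 0 := by
    simpa [h_zero] using (setIntegral_pos_iff_support_of_nonneg_ae h_ae hx_int).not
  have h_sub : Ioc s t ⊆ Function.support x ∩ S := fun u hu => ⟨(hpos u hu).ne', hst hu⟩
  have h_Ioc : Y.measure (Ioc s t) = 0 := measure_mono_null h_sub h_null
  rw [Y.measure_Ioc, ENNReal.ofReal_eq_zero] at h_Ioc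
  linarith

def runningMaxNegPart (z : ℝ → ℝ) (t : ℝ) : ℝ := sSup ((fun s => max 0 (-z s)) '' Icc 0 t)

section Supersolution

variable {T : ℝ} {z y : ℝ → ℝ} (hy0 : y 0 = 0) (hy_mono : MonotoneOn y (Icc 0 T))
  (hzy : ∀ s ∈ Icc 0 T, 0 ≤ z s + y s)
include hy0 hy_mono hzy

theorem max_zero_neg_le_of_monotoneOn {s t : ℝ} (hs : s ∈ Icc 0 t) (ht : t ≤ T) :
    max 0 (-z s) ≤ y t := by
  have hsT : s ∈ Icc 0 T := ⟨hs.1, hs.2.trans ht⟩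
  have htT : t ∈ Icc 0 T := ⟨hs.1.trans hs.2, ht⟩
  have h0 : y 0 ≤ y t := hy_mono (left_mem_Icc.2 (hs.1.trans hs.2 |>.trans ht)) htT htT.1
  have hs_t : y s ≤ y t := hy_mono hsT htT hs.2
  exact max_le (hy0 ▸ h0) (by linarith [hzy s hsT])

theorem bddAbove_max_zero_neg_image {t : ℝ} (ht : t ≤ T) :
    BddAbove ((fun s => max 0 (-z s)) '' Icc 0 t) :=
  ⟨y t, forall_mem_image.2 fun _ hs => max_zero_neg_le_of_monotoneOn hy0 hy_mono hzy hs ht⟩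

theorem runningMaxNegPart_le {t : ℝ} (ht : t ∈ Icc 0 T) : runningMaxNegPart z t ≤ y t :=
  csSup_le ((nonempty_Icc.2 ht.1).image _)
    (forall_mem_image.2 fun _ hs => max_zero_neg_le_of_monotoneOn hy0 hy_mono hzy hs ht.2)

end Supersolution

namespace SolvesSkorokhod

variable {T : ℝ} {z x y : ℝ → ℝ}

theorem nonneg_add (h : SolvesSkorokhod T z x y) : ∀ s ∈ Icc 0 T, 0 ≤ z s + y s :=
  fun s hs => h.2.2.1 s hs ▸ h.2.2.2.1 s hs

theorem le_of_pos_on_Ioc (h : SolvesSkorokhod T z x y) {s t : ℝ} (hs : s ∈ Icc 0 T)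
    (ht : t ∈ Icc 0 T) (hpos : ∀ u ∈ Ioc s t, 0 < x u) : y t ≤ y s := by
  obtain ⟨hx_cont, hy_cont, -, hx_nonneg, hy0, hy_mono, hy_int⟩ := h
  have hT : 0 ≤ T := ht.1.trans ht.2
  set Y := StieltjesFunction.ofMonotoneOnIcc hT hy_cont hy_mono
  have hY : ∀ u ∈ Icc 0 T, Y u = y u := fun _ =>
    StieltjesFunction.ofMonotoneOnIcc_of_mem hT hy_cont hy_mono
  have hY_left : ∀ u ≤ 0, Y u = 0 := fun _ hu => by
    rw [StieltjesFunction.ofMonotoneOnIcc_of_le_left hT hy_cont hy_mono hu, hy0]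
  have hY_right : ∀ u, T ≤ u → Y u = y T := fun _ =>
    StieltjesFunction.ofMonotoneOnIcc_of_right_le hT hy_cont hy_mono
  have h_zero : ∫ u in Icc 0 T, x u ∂Y.measure = 0 :=
    hy_int Y hY_left hY hY_right T (right_mem_Icc.2 hT)
  have := Y.le_of_setIntegral_eq_zero (hx_cont.integrableOn_compact isCompact_Icc) hx_nonneg
    measurableSet_Icc h_zero (Ioc_subset_Icc_self.trans (Icc_subset_Icc hs.1 ht.2)) hpos
  rwa [hY t ht, hY s hs] at this

theorem le_runningMaxNegPart (h : SolvesSkorokhod T z x y) {t : ℝ} (ht : t ∈ Icc 0 T) :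
    y t ≤ runningMaxNegPart z t := by
  obtain ⟨hx_cont, -, hxz, hx_nonneg, hy0, hy_mono, -⟩ := id h
  have htT : Icc 0 t ⊆ Icc 0 T := Icc_subset_Icc_right ht.2
  -- `s` is the last zero of `x` in `[0,t]`, or `0` if there is none.
  set A := {0} ∪ (Icc 0 t ∩ x ⁻¹' {0})
  have hA_closed : IsClosed A := isClosed_singleton.union
    ((hx_cont.mono htT).preimage_isClosed_of_isClosed isClosed_Icc isClosed_singleton)
  have hA_le : ∀ u ∈ A, u ≤ t := by
    rintro u (rfl | hu)
    exacts [ht.1, hu.1.2]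
  have hA_bdd : BddAbove A := ⟨t, hA_le⟩
  have h0A : (0 : ℝ) ∈ A := Or.inl rfl
  set s := sSup A
  have hsA : s ∈ A := hA_closed.csSup_mem ⟨0, h0A⟩ hA_bdd
  have hs : s ∈ Icc 0 t := ⟨le_csSup hA_bdd h0A, csSup_le ⟨0, h0A⟩ hA_le⟩
  have hpos : ∀ u ∈ Ioc s t, 0 < x u := by
    intro u hu
    have hu' : u ∈ Icc 0 t := ⟨hs.1.trans hu.1.le, hu.2⟩
    refine (hx_nonneg u (htT hu')).lt_of_ne' fun hxu => ?_
    exact hu.1.not_ge (le_csSup hA_bdd (Or.inr ⟨hu', hxu⟩))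
  have h_flat : y t ≤ y s := h.le_of_pos_on_Ioc (htT hs) ht hpos
  have h_ys : y s ≤ max 0 (-z s) := by
    rcases hsA with hs0 | ⟨-, hxs⟩
    · rw [hs0, hy0]
      exact le_max_left _ _
    · have := hxz s (htT hs)
      rw [mem_preimage, mem_singleton_iff] at hxs
      exact le_max_of_le_right (by linarith)
  have h_bdd := bddAbove_max_zero_neg_image hy0 hy_mono h.nonneg_add ht.2
  exact h_flat.trans (h_ys.trans (le_csSup h_bdd (mem_image_of_mem _ hs)))

theorem eq_runningMaxNegPart (h : SolvesSkorokhod T z x y) {t : ℝ} (ht : t ∈ Icc 0 T) :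
    y t = runningMaxNegPart z t := by
  obtain ⟨-, -, -, -, hy0, hy_mono, -⟩ := id h
  exact (h.le_runningMaxNegPart ht).antisymm (runningMaxNegPart_le hy0 hy_mono h.nonneg_add ht)

end SolvesSkorokhod

theorem skorokhod_uniqueness_general
    (T : ℝ) (z : ℝ → ℝ)
    (x y xt yt : ℝ → ℝ)
    (h1 : SolvesSkorokhod T z x y) (h2 : SolvesSkorokhod T z xt yt) :
    (∀ t ∈ Set.Icc 0 T, x t = xt t ∧ y t = yt t) ∧
    (∀ t ∈ Set.Icc 0 T,
      y t = sSup ((fun s => max 0 (-z s)) '' Set.Icc 0 t) ∧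
      x t = z t + sSup ((fun s => max 0 (-z s)) '' Set.Icc 0 t)) := by
  have hy : ∀ t ∈ Icc 0 T, y t = runningMaxNegPart z t := fun _ => h1.eq_runningMaxNegPart
  have hyt : ∀ t ∈ Icc 0 T, yt t = runningMaxNegPart z t := fun _ => h2.eq_runningMaxNegPart
  obtain ⟨-, -, hx, -⟩ := h1
  obtain ⟨-, -, hxt, -⟩ := h2
  refine ⟨fun t ht => ?_, fun t ht => ⟨hy t ht, ?_⟩⟩
  · have hy_eq : y t = yt t := (hy t ht).trans (hyt t ht).symm
    exact ⟨by rw [hx t ht, hxt t ht, hy_eq], hy_eq⟩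
  · rw [hx t ht, hy t ht]
    rfl

/-- Uniqueness of the solution of the Skorokhod problem, together with the explicit
formula `y_t = max_{s ∈ [0,t]} (z_s)⁻`, `x_t = z_t + y_t`. -/
theorem skorokhod_uniqueness
    (T : ℝ) (hT : 0 < T) (z : ℝ → ℝ)
    (hz_cont : ContinuousOn z (Set.Icc 0 T)) (hz0 : 0 ≤ z 0)
    (x y xt yt : ℝ → ℝ)
    (h1 : SolvesSkorokhod T z x y) (h2 : SolvesSkorokhod T z xt yt) :
    (∀ t ∈ Set.Icc 0 T, x t = xt t ∧ y t = yt t) ∧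
    (∀ t ∈ Set.Icc 0 T,
      y t = sSup ((fun s => max 0 (-z s)) '' Set.Icc 0 t) ∧
      x t = z t + sSup ((fun s => max 0 (-z s)) '' Set.Icc 0 t)) :=
  skorokhod_uniqueness_general T z x y xt yt h1 h2
end
end
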